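/- For n = 2 and α ∈ (0, 1/2), with γ = α + (1-2α)β, the function η(β) = (1-2α)·γ(1-γ)·log(γ/(1-γ)) - (1-2α)²·β(1-β)·log(β/(1-β)) satisfies η(β) < 0 for all β ∈ (0, 1/2); equivalently, the function φ(R) (whose second derivative has the sign of η) is strictly concave on (0, log 2). -/

import Mathlib

open Real Set

/-- The function η in the binary case n = 2, with γ = α + (1-2α)β. -/
noncomputable def etaBin (α β : ℝ) : ℝ :=
  (1 - 2 * α) * ((α + (1 - 2 * α) * β) * (1 - (α + (1 - 2 * α) * β)))
      * Real.log ((α + (1 - 2 * α) * β) / (1 - (α + (1 - 2 * α) * β)))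
    - (1 - 2 * α) ^ 2 * (β * (1 - β)) * Real.log (β / (1 - β))

noncomputable def gAux (x : ℝ) : ℝ :=
  (Real.log (1 - x) - Real.log x) - (1 - 2*x) / (1 - 2*x + 2*x^2)

noncomputable def hAux (x : ℝ) : ℝ :=
  x * (1 - x) * (Real.log x - Real.log (1 - x)) / (1 - 2*x)

lemma D_pos (x : ℝ) : 0 < 1 - 2*x + 2*x^2 := by nlinarith [sq_nonneg (2*x - 1)]

lemma gAux_hasDeriv (x : ℝ) (hx : x ∈ Ioo (0:ℝ) 1) :
    HasDerivAt gAux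
      ((-(1-x)⁻¹ - x⁻¹) - ((-2)*(1 - 2*x + 2*x^2) - (1 - 2*x)*(-2 + 4*x))/(1 - 2*x + 2*x^2)^2)
      x := by
  obtain ⟨hx0, hx1⟩ := hx
  have h1x : (0:ℝ) < 1 - x := by linarith
  have hlog1 : HasDerivAt (fun y : ℝ => Real.log y) x⁻¹ x := Real.hasDerivAt_log hx0.ne'
  have hlog2 : HasDerivAt (fun y : ℝ => Real.log (1 - y)) (-(1-x)⁻¹) x := by
    have h := (Real.hasDerivAt_log h1x.ne').comp x
      ((hasDerivAt_const x (1:ℝ)).sub (hasDerivAt_id x))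
    have h2 : HasDerivAt (fun y : ℝ => Real.log (1 - y)) ((1-x)⁻¹ * (0 - 1)) x := h
    simpa using h2
  have hnum : HasDerivAt (fun y : ℝ => 1 - 2*y) (-2 : ℝ) x := by
    have h2 : HasDerivAt (fun y : ℝ => 1 - 2*y) (0 - 2 * 1) x :=
      ((hasDerivAt_const x (1:ℝ)).sub ((hasDerivAt_id x).const_mul 2))
    simpa using h2
  have hden : HasDerivAt (fun y : ℝ => 1 - 2*y + 2*y^2) (-2 + 4*x) x := by
    have h : HasDerivAt (fun y : ℝ => 1 - 2*y + 2*y^2) (-2 + 2 * ((2:ℕ) * x^(2-1))) x :=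
      hnum.add (((hasDerivAt_pow 2 x)).const_mul 2)
    convert h using 1
    simp; ring
  have hfrac : HasDerivAt (fun y : ℝ => (1 - 2*y)/(1 - 2*y + 2*y^2))
      (((-2)*(1 - 2*x + 2*x^2) - (1 - 2*x)*(-2 + 4*x))/(1 - 2*x + 2*x^2)^2) x :=
    hnum.div hden (D_pos x).ne'
  exact (hlog2.sub hlog1).sub hfrac

lemma gAux_deriv_neg (x : ℝ) (hx : x ∈ Ioo (0:ℝ) (1/2)) :
    ((-(1-x)⁻¹ - x⁻¹) - ((-2)*(1 - 2*x + 2*x^2) - (1 - 2*x)*(-2 + 4*x))/(1 - 2*x + 2*x^2)^2) < 0 := by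
  obtain ⟨hx0, hx1⟩ := hx
  have h1x : (0:ℝ) < 1 - x := by linarith
  have h2x : (0:ℝ) < 1 - 2*x := by linarith
  have hD := D_pos x
  have key : (4*x*(1-x))/(1-2*x+2*x^2)^2 < 1/(x*(1-x)) := by
    rw [div_lt_div_iff₀ (by positivity) (by positivity)]
    nlinarith [mul_pos h2x h2x]
  have hN : ((-2)*(1 - 2*x + 2*x^2) - (1 - 2*x)*(-2 + 4*x)) = -(4*x*(1-x)) := by ring
  have e : (-(1-x)⁻¹ - x⁻¹ : ℝ) = -(1/(x*(1-x))) := by field_simp; ring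
  rw [hN, e, neg_div]
  linarith

lemma gAux_pos (x : ℝ) (hx : x ∈ Ioo (0:ℝ) (1/2)) : 0 < gAux x := by
  have hanti : StrictAntiOn gAux (Ioc (0:ℝ) (1/2)) := by
    apply strictAntiOn_of_deriv_neg (convex_Ioc 0 (1/2))
    · intro y hy
      have hy' : y ∈ Ioo (0:ℝ) 1 := ⟨hy.1, by linarith [hy.2]⟩
      exact (gAux_hasDeriv y hy').differentiableAt.continuousAt.continuousWithinAt
    · intro y hy
      rw [interior_Ioc] at hy
      have hy' : y ∈ Ioo (0:ℝ) 1 := ⟨hy.1, by linarith [hy.2]⟩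
      rw [(gAux_hasDeriv y hy').deriv]
      exact gAux_deriv_neg y hy
  have h12 : gAux (1/2 : ℝ) = 0 := by
    unfold gAux
    norm_num
  have h := hanti (Ioo_subset_Ioc_self hx) (right_mem_Ioc.mpr (by linarith [hx.1])) hx.2
  rw [h12] at h
  exact h

lemma key_ineq (x : ℝ) (hx : x ∈ Ioo (0:ℝ) (1/2)) :
    (1 - 2*x + 2*x^2) * (Real.log x - Real.log (1 - x)) + (1 - 2*x) < 0 := by
  have hg := gAux_pos x hx
  have hD := D_pos x
  unfold gAux at hg
  rw [sub_pos, div_lt_iff₀ hD] at hg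
  nlinarith [hg]

lemma hAux_hasDeriv (x : ℝ) (hx : x ∈ Ioo (0:ℝ) (1/2)) :
    HasDerivAt hAux
      (((1 - 2*x + 2*x^2) * (Real.log x - Real.log (1 - x)) + (1 - 2*x)) / (1 - 2*x)^2) x := by
  obtain ⟨hx0, hx1⟩ := hx
  have h1x : (0:ℝ) < 1 - x := by linarith
  have h2x : (0:ℝ) < 1 - 2*x := by linarith
  have hlog1 : HasDerivAt (fun y : ℝ => Real.log y) x⁻¹ x := Real.hasDerivAt_log hx0.ne'
  have hlog2 : HasDerivAt (fun y : ℝ => Real.log (1 - y)) (-(1-x)⁻¹) x := by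
    have h := (Real.hasDerivAt_log h1x.ne').comp x
      ((hasDerivAt_const x (1:ℝ)).sub (hasDerivAt_id x))
    have h2 : HasDerivAt (fun y : ℝ => Real.log (1 - y)) ((1-x)⁻¹ * (0 - 1)) x := h
    simpa using h2
  have hpoly : HasDerivAt (fun y : ℝ => y * (1 - y)) (1 - 2*x) x := by
    have h : HasDerivAt (fun y : ℝ => y * (1 - y)) (1 * (1 - x) + x * (0 - 1)) x :=
      (hasDerivAt_id x).mul ((hasDerivAt_const x (1:ℝ)).sub (hasDerivAt_id x))
    convert h using 1
    simp; ring
  have hnum : HasDerivAt (fun y : ℝ => y * (1 - y) * (Real.log y - Real.log (1 - y)))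
      ((1 - 2*x) * (Real.log x - Real.log (1 - x)) + x * (1 - x) * (x⁻¹ - (-(1-x)⁻¹))) x :=
    hpoly.mul (hlog1.sub hlog2)
  have hden : HasDerivAt (fun y : ℝ => 1 - 2*y) (-2 : ℝ) x := by
    have h2 : HasDerivAt (fun y : ℝ => 1 - 2*y) (0 - 2 * 1) x :=
      ((hasDerivAt_const x (1:ℝ)).sub ((hasDerivAt_id x).const_mul 2))
    simpa using h2
  have h : HasDerivAt hAux
      ((((1 - 2 * x) * (Real.log x - Real.log (1 - x)) + x * (1 - x) * (x⁻¹ - -(1 - x)⁻¹)) * (1 - 2 * x) -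
        x * (1 - x) * (Real.log x - Real.log (1 - x)) * -2) / (1 - 2 * x) ^ 2) x :=
    hnum.div hden h2x.ne'
  convert h using 1
  have hx0' := hx0.ne'
  have h1x' := h1x.ne'
  field_simp
  ring

lemma hAux_anti : StrictAntiOn hAux (Ioo (0:ℝ) (1/2)) := by
  apply strictAntiOn_of_deriv_neg (convex_Ioo 0 (1/2))
  · intro y hy
    exact (hAux_hasDeriv y hy).differentiableAt.continuousAt.continuousWithinAt
  · intro y hy
    rw [interior_Ioo] at hy
    rw [(hAux_hasDeriv y hy).deriv]
    apply div_neg_of_neg_of_pos (key_ineq y hy)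
    have : (0:ℝ) < 1 - 2*y := by linarith [hy.2]
    positivity

theorem etaBin_neg (α : ℝ) (hα : α ∈ Set.Ioo (0 : ℝ) (1 / 2)) :
    ∀ β ∈ Set.Ioo (0 : ℝ) (1 / 2), etaBin α β < 0 := by
  intro β hβ
  obtain ⟨hα0, hα1⟩ := hα
  obtain ⟨hβ0, hβ1⟩ := hβ
  set γ := α + (1 - 2 * α) * β with hγdef
  have hβγ : β < γ := by nlinarith
  have hγ1 : γ < 1/2 := by nlinarith
  have hγ0 : 0 < γ := by nlinarith
  have h2γ : (0:ℝ) < 1 - 2*γ := by linarith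
  have h2β : (0:ℝ) < 1 - 2*β := by linarith
  have h2α : (0:ℝ) < 1 - 2*α := by linarith
  have hh : hAux γ < hAux β := hAux_anti ⟨hβ0, hβ1⟩ ⟨hγ0, hγ1⟩ hβγ
  have hγβ : 1 - 2*γ = (1 - 2*α) * (1 - 2*β) := by rw [hγdef]; ring
  have heq : etaBin α β = (1 - 2*α) * (1 - 2*γ) * (hAux γ - hAux β) := by
    unfold etaBin hAux
    rw [Real.log_div hγ0.ne' (by linarith : (1:ℝ) - γ ≠ 0),
        Real.log_div hβ0.ne' (by linarith : (1:ℝ) - β ≠ 0)]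
    rw [hγβ]
    field_simp
    ring
  rw [heq]
  exact mul_neg_of_pos_of_neg (mul_pos h2α h2γ) (by linarith)
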